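/- Fix an alphabet Σ and non-blocking non-deterministic automata γ : X → Bool × (Σ → Set X) and δ : Y → Bool × (Σ → Set Y) (all successor sets nonempty). Embed such automata into the monad M X = Set (List Σ × (X ⊕ Unit)) via α_X(b, t) = {([], Sum.inr ⋆) | b = true} ∪ {([a], Sum.inl x) | a ∈ Σ, x ∈ t a}, with unit η_X(x) = {([], Sum.inl x)} and Kleisli extension f*(S) = {(u ++ v, c) | ∃ x, (u, Sum.inl x) ∈ S ∧ (v, c) ∈ f x} ∪ {(u, Sum.inr ⋆) | (u, Sum.inr ⋆) ∈ S}, and iterates γ^(0) = η_X, γ^(n+1) = (α_X ∘ γ)* ∘ γ^(n). Then states x ∈ X and y ∈ Y are α-trace equivalent (their α-trace sequences (M(!)(γ^(n)(x)))_n and (M(!)(δ^(n)(y)))_n coincide) if and only if they accept the same language: {u | ∃ z, x →^u z ∧ (γ z).1 = true} = {u | ∃ z, y →^u z ∧ (δ z).1 = true}. -/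
import Mathlib


variable {A : Type*}

/-- Unit of the monad `M X = Set (List A × (X ⊕ Unit))`. -/
def tEta {X : Type*} (x : X) : Set (List A × (X ⊕ Unit)) := {([], Sum.inl x)}

/-- Kleisli extension for `M X = Set (List A × (X ⊕ Unit))`. -/
def tStar {X Y : Type*} (f : X → Set (List A × (Y ⊕ Unit)))
    (S : Set (List A × (X ⊕ Unit))) : Set (List A × (Y ⊕ Unit)) :=
  {p | ∃ u v x c, p = (u ++ v, c) ∧ (u, Sum.inl x) ∈ S ∧ (v, c) ∈ f x} ∪
  {p | ∃ u, p = (u, Sum.inr ()) ∧ (u, Sum.inr ()) ∈ S}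

/-- Trace semantics for non-deterministic automata `γ : X → Bool × (A → Set X)`:
`α (b, t) = {([], ✓) | b = true} ∪ {([a], x) | x ∈ t a}`. -/
def nAlpha {X : Type*} (p : Bool × (A → Set X)) : Set (List A × (X ⊕ Unit)) :=
  {q | q = ([], Sum.inr ()) ∧ p.1 = true} ∪
  {q | ∃ a x, q = ([a], Sum.inl x) ∧ x ∈ p.2 a}

/-- Iterates `γ⁽⁰⁾ = η`, `γ⁽ⁿ⁺¹⁾ = (α ∘ γ)* ∘ γ⁽ⁿ⁾`. -/
def nIter {X : Type*} (γ : X → Bool × (A → Set X)) :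
    ℕ → X → Set (List A × (X ⊕ Unit))
  | 0 => tEta
  | n + 1 => tStar (nAlpha ∘ γ) ∘ nIter γ n

/-- `M(!)`: collapse the live-state component to a one-element type. -/
def tBang {X : Type*} (S : Set (List A × (X ⊕ Unit))) :
    Set (List A × (PUnit ⊕ Unit)) :=
  (fun p => (p.1, Sum.map (fun _ => PUnit.unit) id p.2)) '' S

/-- Extended transition relation of a non-deterministic automaton. -/
inductive NSteps {X : Type*} (γ : X → Bool × (A → Set X)) : X → List A → X → Prop
  | nil (x : X) : NSteps γ x [] x
  | cons {x w z : X} {a : A} {u : List A} :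
      w ∈ (γ x).2 a → NSteps γ w u z → NSteps γ x (a :: u) z

section Aux

variable {X : Type*} (γ : X → Bool × (A → Set X))

lemma nsteps_snoc {x z : X} {u : List A} {a : A} :
    NSteps γ x (u ++ [a]) z ↔ ∃ w, NSteps γ x u w ∧ z ∈ (γ w).2 a := by
  induction u generalizing x with
  | nil =>
    simp only [List.nil_append]
    constructor
    · rintro (_ | ⟨hw, hs⟩)
      cases hs
      exact ⟨_, NSteps.nil _, hw⟩
    · rintro ⟨w, hw, hz⟩
      cases hw
      exact NSteps.cons hz (NSteps.nil _)
  | cons b u ih =>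
    constructor
    · rintro (_ | ⟨hw, hs⟩)
      obtain ⟨w', h1, h2⟩ := ih.1 hs
      exact ⟨w', NSteps.cons hw h1, h2⟩
    · rintro ⟨w, hw, hz⟩
      cases hw with
      | cons h1 h2 => exact NSteps.cons h1 (ih.2 ⟨_, h2, hz⟩)

lemma exists_nsteps (hγ : ∀ (x : X) (a : A), ((γ x).2 a).Nonempty)
    (x : X) (u : List A) : ∃ z, NSteps γ x u z := by
  induction u generalizing x with
  | nil => exact ⟨x, NSteps.nil x⟩
  | cons a u ih =>
    obtain ⟨w, hw⟩ := hγ x a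
    obtain ⟨z, hz⟩ := ih w
    exact ⟨z, NSteps.cons hw hz⟩

lemma mem_nIter {n : ℕ} {x : X} {p : List A × (X ⊕ Unit)} :
    p ∈ nIter γ n x ↔
      (∃ u z, p = (u, Sum.inl z) ∧ NSteps γ x u z ∧ u.length = n) ∨
      (∃ u z, p = (u, Sum.inr ()) ∧ NSteps γ x u z ∧ (γ z).1 = true ∧
        u.length < n) := by
  induction n generalizing p with
  | zero =>
    simp only [nIter, tEta, Set.mem_singleton_iff]
    constructor
    · rintro rfl
      exact Or.inl ⟨[], x, rfl, NSteps.nil x, rfl⟩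
    · rintro (⟨u, z, rfl, h, hl⟩ | ⟨u, z, rfl, h, ha, hl⟩)
      · rw [List.length_eq_zero_iff] at hl
        subst hl; cases h; rfl
      · omega
  | succ n ih =>
    show p ∈ tStar (nAlpha ∘ γ) (nIter γ n x) ↔ _
    constructor
    · rintro (⟨u, v, w, c, rfl, hmem, hv⟩ | ⟨u, rfl, hmem⟩)
      · rcases ih.1 hmem with ⟨u', w', heq, hst, hl⟩ | ⟨u', w', heq, _, _, _⟩
        · simp only [Prod.mk.injEq, Sum.inl.injEq] at heq
          obtain ⟨rfl, rfl⟩ := heq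
          rcases hv with ⟨hv, hacc⟩ | ⟨a, x', hv, hx'⟩
          · obtain ⟨rfl, rfl⟩ : v = [] ∧ c = Sum.inr () := by
              simpa [Prod.ext_iff] using hv
            exact Or.inr ⟨u, w, by simp, hst, hacc, by simp [hl]⟩
          · obtain ⟨rfl, rfl⟩ : v = [a] ∧ c = Sum.inl x' := by
              simpa [Prod.ext_iff] using hv
            exact Or.inl ⟨u ++ [a], x',
              rfl, (nsteps_snoc γ).2 ⟨w, hst, hx'⟩, by simp [hl]⟩
        · simp [Prod.ext_iff] at heq
      · rcases ih.1 hmem with ⟨u', w', heq, _, _⟩ | ⟨u', z', heq, hst, ha, hl⟩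
        · simp [Prod.ext_iff] at heq
        · simp only [Prod.mk.injEq] at heq
          obtain ⟨rfl, -⟩ := heq
          exact Or.inr ⟨u, z', rfl, hst, ha, by omega⟩
    · rintro (⟨u, z, rfl, hst, hl⟩ | ⟨u, z, rfl, hst, ha, hl⟩)
      · have hu : u ≠ [] := by intro h; subst h; simp at hl
        obtain ⟨u', a, rfl⟩ := List.eq_nil_or_concat u |>.resolve_left hu
        simp only [List.concat_eq_append] at hst hl ⊢
        obtain ⟨w, hw, hz⟩ := (nsteps_snoc γ).1 hst
        refine Or.inl ⟨u', [a], w, Sum.inl z, rfl,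
          ih.2 (Or.inl ⟨u', w, rfl, hw, by simpa using hl⟩),
          Or.inr ⟨a, z, rfl, hz⟩⟩
      · rcases Nat.lt_succ_iff_lt_or_eq.1 hl with hl' | hl'
        · exact Or.inr ⟨u, rfl, ih.2 (Or.inr ⟨u, z, rfl, hst, ha, hl'⟩)⟩
        · refine Or.inl ⟨u, [], z, Sum.inr (), by simp, 
            ih.2 (Or.inl ⟨u, z, rfl, hst, hl'⟩),
            Or.inl ⟨rfl, ha⟩⟩

lemma mem_tBang_nIter (hγ : ∀ (x : X) (a : A), ((γ x).2 a).Nonempty)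
    {n : ℕ} {x : X} {p : List A × (PUnit ⊕ Unit)} :
    p ∈ tBang (nIter γ n x) ↔
      (∃ u : List A, p = (u, Sum.inl PUnit.unit) ∧ u.length = n) ∨
      (∃ u : List A, p = (u, Sum.inr ()) ∧ u.length < n ∧
        ∃ z, NSteps γ x u z ∧ (γ z).1 = true) := by
  constructor
  · rintro ⟨q, hq, rfl⟩
    rcases (mem_nIter γ).1 hq with ⟨u, z, rfl, hst, hl⟩ | ⟨u, z, rfl, hst, ha, hl⟩
    · exact Or.inl ⟨u, rfl, hl⟩
    · exact Or.inr ⟨u, rfl, hl, z, hst, ha⟩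
  · rintro (⟨u, rfl, hl⟩ | ⟨u, rfl, hl, z, hst, ha⟩)
    · obtain ⟨z, hz⟩ := exists_nsteps γ hγ x u
      exact ⟨(u, Sum.inl z), (mem_nIter γ).2 (Or.inl ⟨u, z, rfl, hz, hl⟩), rfl⟩
    · exact ⟨(u, Sum.inr ()), (mem_nIter γ).2 (Or.inr ⟨u, z, rfl, hst, ha, hl⟩), rfl⟩

end Aux

/-- two states of non-blocking non-deterministic automata are
`α`-trace equivalent iff they accept the same language. -/
theorem stmt10 {X Y : Type*} (γ : X → Bool × (A → Set X))
    (δ : Y → Bool × (A → Set Y))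
    (hγ : ∀ (x : X) (a : A), ((γ x).2 a).Nonempty)
    (hδ : ∀ (y : Y) (a : A), ((δ y).2 a).Nonempty)
    (x : X) (y : Y) :
    (∀ n, tBang (nIter γ n x) = tBang (nIter δ n y)) ↔
      {u : List A | ∃ z, NSteps γ x u z ∧ (γ z).1 = true} =
        {u : List A | ∃ z, NSteps δ y u z ∧ (δ z).1 = true} := by
  constructor
  · intro h
    ext u
    constructor
    · rintro ⟨z, hst, ha⟩
      have hmem : (u, Sum.inr ()) ∈ tBang (nIter γ (u.length + 1) x) :=
        (mem_tBang_nIter γ hγ).2 (Or.inr ⟨u, rfl, by omega, z, hst, ha⟩)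
      rw [h] at hmem
      rcases (mem_tBang_nIter δ hδ).1 hmem with ⟨u', heq, _⟩ | ⟨u', heq, _, hz⟩
      · simp [Prod.ext_iff] at heq
      · obtain rfl : u = u' := by simpa [Prod.ext_iff] using heq
        exact hz
    · rintro ⟨z, hst, ha⟩
      have hmem : (u, Sum.inr ()) ∈ tBang (nIter δ (u.length + 1) y) :=
        (mem_tBang_nIter δ hδ).2 (Or.inr ⟨u, rfl, by omega, z, hst, ha⟩)
      rw [← h] at hmem
      rcases (mem_tBang_nIter γ hγ).1 hmem with ⟨u', heq, _⟩ | ⟨u', heq, _, hz⟩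
      · simp [Prod.ext_iff] at heq
      · obtain rfl : u = u' := by simpa [Prod.ext_iff] using heq
        exact hz
  · intro h n
    ext p
    rw [mem_tBang_nIter γ hγ, mem_tBang_nIter δ hδ]
    have h' : ∀ u : List A, (∃ z, NSteps γ x u z ∧ (γ z).1 = true) ↔
        (∃ z, NSteps δ y u z ∧ (δ z).1 = true) := fun u =>
      Set.ext_iff.1 h u
    constructor
    · rintro (⟨u, rfl, hl⟩ | ⟨u, rfl, hl, hz⟩)
      · exact Or.inl ⟨u, rfl, hl⟩
      · exact Or.inr ⟨u, rfl, hl, (h' u).1 hz⟩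
    · rintro (⟨u, rfl, hl⟩ | ⟨u, rfl, hl, hz⟩)
      · exact Or.inl ⟨u, rfl, hl⟩
      · exact Or.inr ⟨u, rfl, hl, (h' u).2 hz⟩
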